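/- Let E = Π_{l=1}^{L} E_l be a finite product of finite-dimensional real inner product spaces with the ℓ² product inner product, let K_l ⊆ E_l be subspaces with orthogonal projections P_l : E_l → E_l, and let P : E → E act componentwise by (P v)_l = P_l(v_l). Let f : E → ℝ be L_f-smooth with L_f > 0 and let 0 < η ≤ 1/L_f. Fix x ∈ E, let (Ω, μ) be a probability space, and let V : Ω → E be an integrable random vector with mean ∫ V dμ = P(∇f(x)) and variance ∫ ‖V(ω) − P(∇f(x))‖² dμ(ω) ≤ σ², such that ω ↦ f(x − η V(ω)) is integrable. Then ∫ f(x − η V(ω)) dμ(ω) ≤ f(x) − (η/2)·‖∇f(x)‖² + (η/2)·Σ_{l=1}^{L} ‖(∇f(x))_l − P_l((∇f(x))_l)‖² + (L_f/2)·η²·σ². -/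

import Mathlib

open scoped RealInnerProductSpace
open MeasureTheory

/-!
Write `G = ∇f(x)` and `p = P G`. Each `G_l - P_l G_l` is orthogonal to `K_l ∋ P_l G_l`, so
`⟪G, p⟫ = ‖p‖²` and `‖G‖² = ‖G - p‖² + ‖p‖²`. Taking expectations in the descent inequality
`f(x - ηV) ≤ f(x) - η⟪G, V⟫ + (L_f/2) η² ‖V‖²` and using the bias–variance decomposition
`𝔼‖V‖² = 𝔼‖V - p‖² + ‖p‖²` gives `𝔼 f(x - ηV) ≤ f(x) - η‖p‖² + (L_f/2) η² (σ² + ‖p‖²)`.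
Since `L_f η ≤ 1`, this is at most `f(x) - (η/2)‖p‖² + (L_f/2) η² σ²`, and Pythagoras turns
`‖p‖²` into `‖G‖² - ‖G - p‖²`.
-/

def componentwiseProj {L : ℕ} {E : Fin L → Type*}
    [∀ l, NormedAddCommGroup (E l)] [∀ l, InnerProductSpace ℝ (E l)]
    (P : ∀ l, E l →L[ℝ] E l) (v : PiLp 2 E) : PiLp 2 E :=
  WithLp.toLp 2 (fun l => P l (v l))

section Projection

theorem inner_sub_apply_self_eq_zero {F : Type*} [NormedAddCommGroup F] [InnerProductSpace ℝ F]
    {K : Submodule ℝ F} {P : F →L[ℝ] F} (hrange : LinearMap.range (P : F →ₗ[ℝ] F) = K)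
    (horth : ∀ v, v - P v ∈ Kᗮ) (v : F) : ⟪v - P v, P v⟫ = 0 := by
  rw [real_inner_comm]
  exact horth v (P v) (hrange ▸ LinearMap.mem_range_self _ v)

variable {L : ℕ} {E : Fin L → Type*}
  [∀ l, NormedAddCommGroup (E l)] [∀ l, InnerProductSpace ℝ (E l)]

theorem inner_sub_componentwiseProj_self_eq_zero {P : ∀ l, E l →L[ℝ] E l}
    (hP : ∀ l v, ⟪v - P l v, P l v⟫ = 0) (v : PiLp 2 E) :
    ⟪v - componentwiseProj P v, componentwiseProj P v⟫ = 0 := by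
  rw [PiLp.inner_apply]
  exact Finset.sum_eq_zero fun l _ => hP l (v l)

theorem norm_sub_componentwiseProj_sq (P : ∀ l, E l →L[ℝ] E l) (v : PiLp 2 E) :
    ‖v - componentwiseProj P v‖ ^ 2 = ∑ l, ‖v l - P l (v l)‖ ^ 2 := by
  rw [PiLp.norm_sq_eq_of_L2]
  rfl

end Projection

section SecondMoment

variable {Ω F : Type*} [MeasurableSpace Ω] {μ : Measure Ω}
  [NormedAddCommGroup F] [InnerProductSpace ℝ F] {V : Ω → F}

theorem norm_sq_eq_norm_sub_sq_add (v m : F) :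
    ‖v‖ ^ 2 = ‖v - m‖ ^ 2 + (2 * ⟪m, v⟫ - ‖m‖ ^ 2) := by
  rw [norm_sub_sq_real, real_inner_comm]
  ring

theorem MeasureTheory.Integrable.norm_sq_of_norm_sub_sq [IsFiniteMeasure μ]
    (hV : Integrable V μ) {m : F} (hvar : Integrable (fun ω => ‖V ω - m‖ ^ 2) μ) :
    Integrable (fun ω => ‖V ω‖ ^ 2) μ := by
  have hcross : Integrable (fun ω => 2 * ⟪m, V ω⟫ - ‖m‖ ^ 2) μ :=
    ((hV.const_inner m).const_mul 2).sub (integrable_const _)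
  exact (hvar.add hcross).congr
    (Filter.Eventually.of_forall fun ω => (norm_sq_eq_norm_sub_sq_add (V ω) m).symm)

theorem integral_norm_sq_eq_integral_norm_sub_sq_add [IsProbabilityMeasure μ] [CompleteSpace F]
    (hV : Integrable V μ) (hvar : Integrable (fun ω => ‖V ω - ∫ ω', V ω' ∂μ‖ ^ 2) μ) :
    ∫ ω, ‖V ω‖ ^ 2 ∂μ = ∫ ω, ‖V ω - ∫ ω', V ω' ∂μ‖ ^ 2 ∂μ + ‖∫ ω, V ω ∂μ‖ ^ 2 := by
  set m := ∫ ω, V ω ∂μ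
  have hcross : Integrable (fun ω => 2 * ⟪m, V ω⟫ - ‖m‖ ^ 2) μ :=
    ((hV.const_inner m).const_mul 2).sub (integrable_const _)
  rw [integral_congr_ae (Filter.Eventually.of_forall fun ω => norm_sq_eq_norm_sub_sq_add (V ω) m),
    integral_add hvar hcross, integral_sub ((hV.const_inner m).const_mul 2) (integrable_const _), integral_const_mul,
    integral_inner hV, real_inner_self_eq_norm_sq, integral_const, probReal_univ, one_smul]
  ring

end SecondMoment

section Descent

variable {F : Type*} [NormedAddCommGroup F] [InnerProductSpace ℝ F]
  {f : F → ℝ} {g : F → F} {Lf : ℝ}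

theorem apply_sub_smul_le_of_smooth
    (hsmooth : ∀ v w, f w ≤ f v + ⟪g v, w - v⟫ + Lf / 2 * ‖w - v‖ ^ 2) (x v : F) (η : ℝ) :
    f (x - η • v) ≤ f x - η * ⟪g x, v⟫ + Lf / 2 * η ^ 2 * ‖v‖ ^ 2 := by
  have h := hsmooth x (x - η • v)
  rw [sub_sub_cancel_left, inner_neg_right, real_inner_smul_right, norm_neg, norm_smul,
    Real.norm_eq_abs, mul_pow, sq_abs] at h
  linarith

theorem integral_apply_sub_smul_le_of_smooth {Ω : Type*} [MeasurableSpace Ω] {μ : Measure Ω}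
    [IsProbabilityMeasure μ] [CompleteSpace F]
    (hsmooth : ∀ v w, f w ≤ f v + ⟪g v, w - v⟫ + Lf / 2 * ‖w - v‖ ^ 2) (x : F) (η : ℝ)
    {V : Ω → F} (hV : Integrable V μ)
    (hvar : Integrable (fun ω => ‖V ω - ∫ ω', V ω' ∂μ‖ ^ 2) μ)
    (hf : Integrable (fun ω => f (x - η • V ω)) μ) :
    ∫ ω, f (x - η • V ω) ∂μ ≤ f x - η * ⟪g x, ∫ ω, V ω ∂μ⟫
      + Lf / 2 * η ^ 2 * (∫ ω, ‖V ω - ∫ ω', V ω' ∂μ‖ ^ 2 ∂μ + ‖∫ ω, V ω ∂μ‖ ^ 2) := by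
  have hinner : Integrable (fun ω => η * ⟪g x, V ω⟫) μ := (hV.const_inner _).const_mul η
  have hlin : Integrable (fun ω => f x - η * ⟪g x, V ω⟫) μ := (integrable_const _).sub hinner
  have hsq : Integrable (fun ω => Lf / 2 * η ^ 2 * ‖V ω‖ ^ 2) μ :=
    (hV.norm_sq_of_norm_sub_sq hvar).const_mul _
  calc ∫ ω, f (x - η • V ω) ∂μ
      ≤ ∫ ω, (f x - η * ⟪g x, V ω⟫ + Lf / 2 * η ^ 2 * ‖V ω‖ ^ 2) ∂μ :=
        integral_mono hf (hlin.add hsq)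
          fun ω => apply_sub_smul_le_of_smooth hsmooth x (V ω) η
    _ = f x - η * ⟪g x, ∫ ω, V ω ∂μ⟫ + Lf / 2 * η ^ 2 * ∫ ω, ‖V ω‖ ^ 2 ∂μ := by
        rw [integral_add hlin hsq,
          integral_sub (integrable_const _) hinner, integral_const, probReal_univ, one_smul,
          integral_const_mul, integral_const_mul, integral_inner hV]
    _ = _ := by rw [integral_norm_sq_eq_integral_norm_sub_sq_add hV hvar]

end Descent

theorem statement6_general {L : ℕ} {E : Fin L → Type*}
    [∀ l, NormedAddCommGroup (E l)] [∀ l, InnerProductSpace ℝ (E l)]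
    [∀ l, FiniteDimensional ℝ (E l)]
    (K : ∀ l, Submodule ℝ (E l)) (P : ∀ l, E l →L[ℝ] E l)
    (hPrange : ∀ l, LinearMap.range (P l : E l →ₗ[ℝ] E l) = K l)
    (hPorth : ∀ l, ∀ v : E l, v - P l v ∈ (K l)ᗮ)
    (f : PiLp 2 E → ℝ) (g : PiLp 2 E → PiLp 2 E) (Lf : ℝ) (hLf : 0 < Lf)
    (hsmooth : ∀ v w : PiLp 2 E, f w ≤ f v + ⟪g v, w - v⟫ + Lf / 2 * ‖w - v‖ ^ 2)
    (η : ℝ) (hη₀ : 0 < η) (hη : η ≤ 1 / Lf)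
    (x : PiLp 2 E)
    {Ω : Type*} [MeasurableSpace Ω] (μ : Measure Ω) [IsProbabilityMeasure μ]
    (V : Ω → PiLp 2 E) (hVint : Integrable V μ)
    (hmean : (∫ ω, V ω ∂μ) = componentwiseProj P (g x))
    (hvarint : Integrable (fun ω => ‖V ω - componentwiseProj P (g x)‖ ^ 2) μ)
    (σ : ℝ) (hvar : (∫ ω, ‖V ω - componentwiseProj P (g x)‖ ^ 2 ∂μ) ≤ σ ^ 2)
    (hfint : Integrable (fun ω => f (x - η • V ω)) μ) :
    (∫ ω, f (x - η • V ω) ∂μ) ≤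
      f x - η / 2 * ‖g x‖ ^ 2 + η / 2 * ∑ l, ‖g x l - P l (g x l)‖ ^ 2
        + Lf / 2 * η ^ 2 * σ ^ 2 := by
  set G := g x
  set p := componentwiseProj P G
  have horth : ⟪G - p, p⟫ = 0 := inner_sub_componentwiseProj_self_eq_zero
    (fun l => inner_sub_apply_self_eq_zero (hPrange l) (hPorth l)) G
  have hGp : ⟪G, p⟫ = ‖p‖ ^ 2 := by
    rw [← real_inner_self_eq_norm_sq]
    linarith [inner_sub_left (𝕜 := ℝ) G p p]
  have hpyth : ‖G‖ ^ 2 = ‖G - p‖ ^ 2 + ‖p‖ ^ 2 := by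
    simpa [horth] using norm_add_sq_real (G - p) p
  have hηLf : Lf * η ≤ 1 := by rwa [le_div_iff₀ hLf, mul_comm] at hη
  rw [← hmean] at hvarint
  have hdescent := integral_apply_sub_smul_le_of_smooth hsmooth x η hVint hvarint hfint
  rw [hmean, hGp] at hdescent
  rw [← norm_sub_componentwiseProj_sq, hpyth]
  have hnoise := mul_le_mul_of_nonneg_left hvar (by positivity : 0 ≤ Lf / 2 * η ^ 2)
  have hstep := mul_le_mul_of_nonneg_right hηLf (by positivity : 0 ≤ η / 2 * ‖p‖ ^ 2)
  linarith

/-- Stochastic descent lemma for projected gradients: if `f` is `L_f`-smooth on the `ℓ²`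
product space `E = Π_l E_l`, `P_l` is the orthogonal projection onto `K_l ⊆ E_l`,
`0 < η ≤ 1/L_f`, and `V` is an integrable random vector with mean `P(∇f(x))` and variance
`∫ ‖V - P(∇f(x))‖² dμ ≤ σ²`, then
`∫ f(x - η V) dμ ≤ f(x) - (η/2)‖∇f(x)‖² + (η/2) Σ_l ‖(∇f(x))_l - P_l((∇f(x))_l)‖²
  + (L_f/2) η² σ²`. -/
theorem statement6 {L : ℕ} {E : Fin L → Type*}
    [∀ l, NormedAddCommGroup (E l)] [∀ l, InnerProductSpace ℝ (E l)]
    [∀ l, FiniteDimensional ℝ (E l)]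
    (K : ∀ l, Submodule ℝ (E l)) (P : ∀ l, E l →L[ℝ] E l)
    (hPrange : ∀ l, LinearMap.range (P l : E l →ₗ[ℝ] E l) = K l)
    (hPorth : ∀ l, ∀ v : E l, v - P l v ∈ (K l)ᗮ)
    (f : PiLp 2 E → ℝ) (g : PiLp 2 E → PiLp 2 E) (Lf : ℝ) (hLf : 0 < Lf)
    (hdiff : ∀ x, HasGradientAt f (g x) x)
    (hsmooth : ∀ v w : PiLp 2 E, f w ≤ f v + ⟪g v, w - v⟫ + Lf / 2 * ‖w - v‖ ^ 2)
    (η : ℝ) (hη₀ : 0 < η) (hη : η ≤ 1 / Lf)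
    (x : PiLp 2 E)
    {Ω : Type*} [MeasurableSpace Ω] (μ : Measure Ω) [IsProbabilityMeasure μ]
    (V : Ω → PiLp 2 E) (hVint : Integrable V μ)
    (hmean : (∫ ω, V ω ∂μ) = componentwiseProj P (g x))
    (hvarint : Integrable (fun ω => ‖V ω - componentwiseProj P (g x)‖ ^ 2) μ)
    (σ : ℝ) (hvar : (∫ ω, ‖V ω - componentwiseProj P (g x)‖ ^ 2 ∂μ) ≤ σ ^ 2)
    (hfint : Integrable (fun ω => f (x - η • V ω)) μ) :
    (∫ ω, f (x - η • V ω) ∂μ) ≤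
      f x - η / 2 * ‖g x‖ ^ 2 + η / 2 * ∑ l, ‖g x l - P l (g x l)‖ ^ 2
        + Lf / 2 * η ^ 2 * σ ^ 2 :=
  statement6_general K P hPrange hPorth f g Lf hLf hsmooth η hη₀ hη x μ V hVint hmean hvarint σ hvar
    hfint
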